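/- If R is strictly monotone on (a,b), then the evolute γ̃ is a C¹-regular curve: R is a homeomorphism of (a,b) onto an interval, the reparametrization γ̃₁(s̃) := γ̃(R⁻¹(s̃)) is continuously differentiable with γ̃₁'(s̃) = ν(R⁻¹(s̃)), which is a nowhere-vanishing unit vector, so γ̃₁ is an arclength parametrization of the evolute of class C¹. -/

import Mathlib

open Set Real Topology Filter
open scoped NNReal

noncomputable section

/-- The Euclidean plane. -/
abbrev Plane := EuclideanSpace ℝ (Fin 2)

/-- Rotation of a plane vector by `+π/2`. -/
def Jrot (v : Plane) : Plane := WithLp.toLp 2 ![-(v 1), v 0]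

local notation "⟪" x ", " y "⟫" => @inner ℝ _ _ x y

/-! `R` is merely continuous, so the evolute need not be differentiable in `s`; it is
differentiable in `R`. Fix `s₀`. By the Frenet equation `ν' = -κ γ'`, the curve
`g(s) = γ(s) + R(s₀) ν(s)` has `g' = κ (R - R(s₀)) γ'`, and since `R` is monotone,
`|R(u) - R(s₀)| ≤ |R(s) - R(s₀)|` for every `u` between `s₀` and `s`. The mean value theorem then
gives `ev(s) - ev(s₀) - (R(s) - R(s₀)) ν(s) = g(s) - g(s₀) = O(|s - s₀| |R(s) - R(s₀)|)`, which is
`o(R(s) - R(s₀))`. Substituting `s = R⁻¹(t)`, with `R⁻¹` continuous, shows that `ev ∘ R⁻¹` has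
derivative `ν ∘ R⁻¹`. -/

open Asymptotics

section InverseOnInterval

variable {f : ℝ → ℝ} {a b x : ℝ}

theorem image_Ioo_mem_nhds_of_injOn (hf : ContinuousOn f (Ioo a b)) (hinj : InjOn f (Ioo a b))
    (hx : x ∈ Ioo a b) : f '' Ioo a b ∈ 𝓝 (f x) := by
  obtain ⟨s₁, hs₁⟩ := exists_between hx.1
  obtain ⟨s₂, hs₂⟩ := exists_between hx.2
  have hsub : Icc s₁ s₂ ⊆ Ioo a b := Icc_subset_Ioo hs₁.1 hs₂.2
  have himage : f '' Ioo s₁ s₂ ⊆ f '' Ioo a b := image_mono (Ioo_subset_Icc_self.trans hsub)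
  have hs₁I : s₁ ∈ Ioo a b := hsub ⟨le_rfl, (hs₁.2.trans hs₂.1).le⟩
  have hs₂I : s₂ ∈ Ioo a b := hsub ⟨(hs₁.2.trans hs₂.1).le, le_rfl⟩
  rcases hf.strictMonoOn_of_injOn_Ioo (hx.1.trans hx.2) hinj with hmono | hanti
  · exact mem_of_superset (Ioo_mem_nhds (hmono hs₁I hx hs₁.2) (hmono hx hs₂I hs₂.1))
      ((intermediate_value_Ioo (hs₁.2.trans hs₂.1).le (hf.mono hsub)).trans himage)
  · exact mem_of_superset (Ioo_mem_nhds (hanti hx hs₂I hs₂.1) (hanti hs₁I hx hs₁.2))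
      ((intermediate_value_Ioo' (hs₁.2.trans hs₂.1).le (hf.mono hsub)).trans himage)

theorem continuousAt_invFunOn_of_injOn (hf : ContinuousOn f (Ioo a b))
    (hinj : InjOn f (Ioo a b)) (hx : x ∈ Ioo a b) :
    ContinuousAt (Function.invFunOn f (Ioo a b)) (f x) := by
  rw [ContinuousAt, hinj.leftInvOn_invFunOn hx]
  intro V hV
  obtain ⟨l, u, hxlu, hluV⟩ :=
    mem_nhds_iff_exists_Ioo_subset.1 (inter_mem hV (Ioo_mem_nhds hx.1 hx.2))
  have hlu : Ioo l u ⊆ Ioo a b := fun y hy => (hluV hy).2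
  refine mem_map.2 <| mem_of_superset
    (image_Ioo_mem_nhds_of_injOn (hf.mono hlu) (hinj.mono hlu) hxlu) ?_
  rintro _ ⟨y, hy, rfl⟩
  rw [mem_preimage, hinj.leftInvOn_invFunOn (hlu hy)]
  exact (hluV hy).1

theorem continuousOn_invFunOn_image_of_injOn (hf : ContinuousOn f (Ioo a b))
    (hinj : InjOn f (Ioo a b)) : ContinuousOn (Function.invFunOn f (Ioo a b)) (f '' Ioo a b) := by
  rintro _ ⟨x, hx, rfl⟩
  exact (continuousAt_invFunOn_of_injOn hf hinj hx).continuousWithinAt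

theorem eventually_apply_invFunOn_eq_of_injOn (hf : ContinuousOn f (Ioo a b))
    (hinj : InjOn f (Ioo a b)) (hx : x ∈ Ioo a b) :
    ∀ᶠ t in 𝓝 (f x), f (Function.invFunOn f (Ioo a b) t) = t :=
  mem_of_superset (image_Ioo_mem_nhds_of_injOn hf hinj hx) fun _ ht => Function.invFunOn_eq ht

end InverseOnInterval

section Reparametrization

variable {E : Type*} [NormedAddCommGroup E] [NormedSpace ℝ E]

theorem hasDerivAt_comp_of_isLittleO_sub_smul {f v : ℝ → E} {φ ψ : ℝ → ℝ} {t s : ℝ}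
    (hψ : ContinuousAt ψ t) (hψt : ψ t = s) (hφψ : ∀ᶠ u in 𝓝 t, φ (ψ u) = u)
    (hv : ContinuousAt v s)
    (hf : (fun r => f r - f s - (φ r - φ s) • v r) =o[𝓝 s] fun r => φ r - φ s) :
    HasDerivAt (fun u => f (ψ u)) (v s) t := by
  subst hψt
  have hφt : φ (ψ t) = t := hφψ.self_of_nhds
  have hcomp := hf.comp_tendsto hψ
  rw [hφt] at hcomp
  have hmain : (fun u => f (ψ u) - f (ψ t) - (u - t) • v (ψ u)) =o[𝓝 t] fun u => u - t :=
    hcomp.congr' (hφψ.mono fun u hu => by simp only [Function.comp, hu])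
      (hφψ.mono fun u hu => by simp only [Function.comp, hu])
  have hvψ : (fun u => v (ψ u) - v (ψ t)) =o[𝓝 t] fun _ => (1 : ℝ) :=
    (isLittleO_one_iff ℝ).2 (by simpa using (hv.comp hψ).sub_const (v (ψ t)))
  have herr := (isBigO_refl (fun u => u - t) (𝓝 t)).smul_isLittleO hvψ
  refine hasDerivAt_iff_isLittleO.2 ((hmain.add (by simpa using herr)).congr_left fun u => ?_)
  module

theorem isBigO_sub_of_deriv_isBigO {g g' : ℝ → E} {φ : ℝ → ℝ} {s : ℝ} {V : Set ℝ}
    (hV : V ∈ 𝓝 s) (hφ : MonotoneOn φ V ∨ AntitoneOn φ V)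
    (hg : ∀ᶠ u in 𝓝 s, HasDerivAt g (g' u) u) (hg' : g' =O[𝓝 s] fun u => φ u - φ s) :
    (fun r => g r - g s) =O[𝓝 s] fun r => (r - s) * (φ r - φ s) := by
  obtain ⟨C, hC, hCbound⟩ := hg'.exists_pos
  obtain ⟨ε, hε, hball⟩ := Metric.eventually_nhds_iff_ball.1 (hg.and (hCbound.bound.and hV))
  refine IsBigO.of_bound C (Metric.eventually_nhds_iff_ball.2 ⟨ε, hε, fun r hr => ?_⟩)
  have hsub : uIcc s r ⊆ Metric.ball s ε :=
    (convex_ball s ε).ordConnected.uIcc_subset (Metric.mem_ball_self hε) hr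
  have hmaps : ∀ u ∈ uIcc s r, |φ u - φ s| ≤ |φ r - φ s| := fun u hu =>
    abs_sub_left_of_mem_uIcc <| hφ.elim
      (fun h => (h.mono fun y hy => (hball y (hsub hy)).2.2).mapsTo_uIcc hu)
      (fun h => (h.mono fun y hy => (hball y (hsub hy)).2.2).mapsTo_uIcc hu)
  calc ‖g r - g s‖ ≤ C * |φ r - φ s| * ‖r - s‖ :=
        (convex_uIcc s r).norm_image_sub_le_of_norm_hasDerivWithin_le
          (fun u hu => (hball u (hsub hu)).1.hasDerivWithinAt)
          (fun u hu => ((hball u (hsub hu)).2.1).trans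
            (by rw [Real.norm_eq_abs]; exact mul_le_mul_of_nonneg_left (hmaps u hu) hC.le))
          left_mem_uIcc right_mem_uIcc
    _ = C * ‖(r - s) * (φ r - φ s)‖ := by
        rw [norm_mul, Real.norm_eq_abs, Real.norm_eq_abs]; ring

end Reparametrization

theorem ContDiffOn.hasDerivAt_deriv {E : Type*} [NormedAddCommGroup E] [NormedSpace ℝ E]
    {f : ℝ → E} {U : Set ℝ} {s : ℝ} (hf : ContDiffOn ℝ 2 f U) (hU : IsOpen U) (hs : s ∈ U) :
    HasDerivAt (deriv f) (deriv (deriv f) s) s :=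
  (((hf.deriv_of_isOpen hU (m := 1) (by norm_num)).differentiableOn (by norm_num)).differentiableAt
    (hU.mem_nhds hs)).hasDerivAt

theorem HasDerivAt.inner_eq_zero_of_eventually_norm_eq {F : Type*} [NormedAddCommGroup F]
    [InnerProductSpace ℝ F] {f : ℝ → F} {f' : F} {s c : ℝ} (hf : HasDerivAt f f' s)
    (hc : ∀ᶠ u in 𝓝 s, ‖f u‖ = c) : ⟪f s, f'⟫ = 0 := by
  have hconst : HasDerivAt (‖f ·‖ ^ 2) 0 s :=
    (hasDerivAt_const s (c ^ 2)).congr_of_eventuallyEq (hc.mono fun u hu => by simp only [hu])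
  simpa using hf.norm_sq.unique hconst

theorem Jrot_Jrot (v : Plane) : Jrot (Jrot v) = -v := by
  ext i; fin_cases i <;> simp [Jrot]

theorem norm_Jrot (v : Plane) : ‖Jrot v‖ = ‖v‖ := by
  simp [EuclideanSpace.norm_eq, Fin.sum_univ_two, Jrot, add_comm]

def JrotCLM : Plane →L[ℝ] Plane := LinearMap.toContinuousLinearMap
  { toFun := Jrot
    map_add' := fun x y => by ext i; fin_cases i <;> simp [Jrot, add_comm]
    map_smul' := fun c x => by ext i; fin_cases i <;> simp [Jrot] }

@[simp] theorem JrotCLM_apply (v : Plane) : JrotCLM v = Jrot v := rfl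

theorem eq_inner_smul_add_inner_Jrot_smul {u : Plane} (hu : ‖u‖ = 1) (w : Plane) :
    w = ⟪w, u⟫ • u + ⟪w, Jrot u⟫ • Jrot u := by
  have h : u 0 ^ 2 + u 1 ^ 2 = 1 := by
    rw [EuclideanSpace.norm_eq, Real.sqrt_eq_one] at hu
    simpa [Fin.sum_univ_two] using hu
  ext i; fin_cases i <;>
    (simp [PiLp.inner_apply, Fin.sum_univ_two, Jrot]; linear_combination (-(w _)) * h)

def unitNormal (γ : ℝ → Plane) (s : ℝ) : Plane := Jrot (deriv γ s)

def curvature (γ : ℝ → Plane) (s : ℝ) : ℝ := ⟪deriv (deriv γ) s, unitNormal γ s⟫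

def radiusOfCurvature (γ : ℝ → Plane) (s : ℝ) : ℝ := (curvature γ s)⁻¹

def evolute (γ : ℝ → Plane) (s : ℝ) : Plane := γ s + radiusOfCurvature γ s • unitNormal γ s

section Frenet

variable {γ : ℝ → Plane} {U : Set ℝ} {s : ℝ}

theorem norm_unitNormal : ‖unitNormal γ s‖ = ‖deriv γ s‖ := norm_Jrot _

theorem continuousOn_unitNormal (hγ : ContDiffOn ℝ 2 γ U) (hU : IsOpen U) :
    ContinuousOn (unitNormal γ) U :=
  JrotCLM.continuous.comp_continuousOn (hγ.continuousOn_deriv_of_isOpen hU (by norm_num))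

theorem continuousOn_curvature (hγ : ContDiffOn ℝ 2 γ U) (hU : IsOpen U) :
    ContinuousOn (curvature γ) U :=
  ((hγ.deriv_of_isOpen hU (m := 1) (by norm_num)).continuousOn_deriv_of_isOpen hU
    le_rfl).inner (continuousOn_unitNormal hγ hU)

theorem deriv_deriv_eq_curvature_smul (hγ : ContDiffOn ℝ 2 γ U) (hU : IsOpen U)
    (harc : ∀ s ∈ U, ‖deriv γ s‖ = 1) (hs : s ∈ U) :
    deriv (deriv γ) s = curvature γ s • unitNormal γ s := by
  have horth : ⟪deriv (deriv γ) s, deriv γ s⟫ = 0 := by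
    rw [real_inner_comm]
    exact (hγ.hasDerivAt_deriv hU hs).inner_eq_zero_of_eventually_norm_eq
      (eventually_of_mem (hU.mem_nhds hs) harc)
  conv_lhs => rw [eq_inner_smul_add_inner_Jrot_smul (harc s hs) (deriv (deriv γ) s)]
  rw [horth, zero_smul, zero_add]
  rfl

theorem hasDerivAt_unitNormal (hγ : ContDiffOn ℝ 2 γ U) (hU : IsOpen U)
    (harc : ∀ s ∈ U, ‖deriv γ s‖ = 1) (hs : s ∈ U) :
    HasDerivAt (unitNormal γ) (-curvature γ s • deriv γ s) s := by
  have h := JrotCLM.hasFDerivAt.comp_hasDerivAt s (hγ.hasDerivAt_deriv hU hs)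
  rwa [deriv_deriv_eq_curvature_smul hγ hU harc hs, map_smul, JrotCLM_apply, unitNormal,
    Jrot_Jrot, smul_neg, ← neg_smul] at h

end Frenet

section Evolute

variable {γ : ℝ → Plane} {U V : Set ℝ} {s : ℝ}

theorem hasDerivAt_add_smul_unitNormal (hγ : ContDiffOn ℝ 2 γ U) (hU : IsOpen U)
    (harc : ∀ s ∈ U, ‖deriv γ s‖ = 1) (hs : s ∈ U) (c : ℝ) :
    HasDerivAt (fun u => γ u + c • unitNormal γ u) ((1 - c * curvature γ s) • deriv γ s) s := by
  have hγs : HasDerivAt γ (deriv γ s) s :=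
    ((hγ.differentiableOn (by norm_num)).differentiableAt (hU.mem_nhds hs)).hasDerivAt
  exact (hγs.add ((hasDerivAt_unitNormal hγ hU harc hs).const_smul c)).congr_deriv (by module)

theorem evolute_sub_isLittleO (hγ : ContDiffOn ℝ 2 γ U) (hU : IsOpen U)
    (harc : ∀ s ∈ U, ‖deriv γ s‖ = 1) (hκ : ∀ s ∈ U, curvature γ s ≠ 0) (hs : s ∈ U)
    (hV : V ∈ 𝓝 s)
    (hmono : MonotoneOn (radiusOfCurvature γ) V ∨ AntitoneOn (radiusOfCurvature γ) V) :
    (fun r => evolute γ r - evolute γ s -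
        (radiusOfCurvature γ r - radiusOfCurvature γ s) • unitNormal γ r) =o[𝓝 s]
      fun r => radiusOfCurvature γ r - radiusOfCurvature γ s := by
  set R := radiusOfCurvature γ
  set c := R s
  set g : ℝ → Plane := fun u => γ u + c • unitNormal γ u
  have hg : ∀ᶠ u in 𝓝 s, HasDerivAt g ((1 - c * curvature γ u) • deriv γ u) u :=
    eventually_of_mem (hU.mem_nhds hs) fun u hu => hasDerivAt_add_smul_unitNormal hγ hU harc hu c
  have hbdd : (fun u => curvature γ u • deriv γ u) =O[𝓝 s] fun _ => (1 : ℝ) :=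
    (((continuousOn_curvature hγ hU).continuousAt (hU.mem_nhds hs)).smul
      ((hγ.continuousOn_deriv_of_isOpen hU (by norm_num)).continuousAt
        (hU.mem_nhds hs))).tendsto.isBigO_one ℝ
  have hg' : (fun u => (1 - c * curvature γ u) • deriv γ u) =O[𝓝 s] fun u => R u - c := by
    refine (((isBigO_refl (fun u => R u - c) _).smul hbdd).congr' ?_ ?_)
    · filter_upwards [hU.mem_nhds hs] with u hu
      rw [smul_smul]
      congr 1
      simp only [R, radiusOfCurvature]
      field_simp [hκ u hu]
    · simp
  have hsplit : (fun r => evolute γ r - evolute γ s - (R r - c) • unitNormal γ r) =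
      fun r => g r - g s := by
    funext r
    simp only [evolute, g, R, c]
    module
  rw [hsplit]
  refine (isBigO_sub_of_deriv_isBigO hV hmono hg hg').trans_isLittleO ?_
  simpa using ((isLittleO_one_iff ℝ).2 (tendsto_sub_nhds_zero_iff.2 tendsto_id)).mul_isBigO
    (isBigO_refl (fun r => R r - c) (𝓝 s))

end Evolute

theorem evolute_C1_regular_of_strictMono_general
    (a b : ℝ) (γ ν ev : ℝ → Plane) (κ R : ℝ → ℝ)
    (hγ : ContDiffOn ℝ 2 γ (Ioo a b))
    (harc : ∀ s ∈ Ioo a b, ‖deriv γ s‖ = 1)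
    (hν : ∀ s, ν s = Jrot (deriv γ s))
    (hκdef : ∀ s, κ s = ⟪deriv (deriv γ) s, ν s⟫)
    (hκ : ∀ s ∈ Ioo a b, κ s ≠ 0)
    (hR : ∀ s, R s = (κ s)⁻¹)
    (hev : ∀ s, ev s = γ s + R s • ν s)
    (hmono : StrictMonoOn R (Ioo a b) ∨ StrictAntiOn R (Ioo a b)) :
    ContinuousOn R (Ioo a b) ∧ InjOn R (Ioo a b) ∧ (R '' Ioo a b).OrdConnected ∧
    ∃ ψ : ℝ → ℝ, ContinuousOn ψ (R '' Ioo a b) ∧ (∀ s ∈ Ioo a b, ψ (R s) = s) ∧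
      (∀ t ∈ R '' Ioo a b, HasDerivAt (fun u => ev (ψ u)) (ν (ψ t)) t) ∧
      ContinuousOn (fun t => ν (ψ t)) (R '' Ioo a b) ∧
      ∀ t ∈ R '' Ioo a b, ‖ν (ψ t)‖ = 1 := by
  obtain rfl : ν = unitNormal γ := funext hν
  obtain rfl : κ = curvature γ := funext hκdef
  obtain rfl : R = radiusOfCurvature γ := funext hR
  obtain rfl : ev = evolute γ := funext hev
  have hU : IsOpen (Ioo a b) := isOpen_Ioo
  have hRcont : ContinuousOn (radiusOfCurvature γ) (Ioo a b) :=
    (continuousOn_curvature hγ hU).inv₀ hκ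
  have hinj : InjOn (radiusOfCurvature γ) (Ioo a b) :=
    hmono.elim StrictMonoOn.injOn StrictAntiOn.injOn
  have hψR : ∀ s ∈ Ioo a b, Function.invFunOn (radiusOfCurvature γ) (Ioo a b)
      (radiusOfCurvature γ s) = s := fun s hs => hinj.leftInvOn_invFunOn hs
  have hψmaps := (surjOn_image (radiusOfCurvature γ) (Ioo a b)).mapsTo_invFunOn
  have hψcont := continuousOn_invFunOn_image_of_injOn hRcont hinj
  refine ⟨hRcont, hinj, (isPreconnected_Ioo.image _ hRcont).ordConnected, _, hψcont, hψR, ?_,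
    (continuousOn_unitNormal hγ hU).comp hψcont hψmaps,
    fun t ht => norm_unitNormal.trans (harc _ (hψmaps ht))⟩
  rintro _ ⟨s, hs, rfl⟩
  rw [hψR s hs]
  exact hasDerivAt_comp_of_isLittleO_sub_smul (continuousAt_invFunOn_of_injOn hRcont hinj hs)
    (hψR s hs) (eventually_apply_invFunOn_eq_of_injOn hRcont hinj hs)
    ((continuousOn_unitNormal hγ hU).continuousAt (hU.mem_nhds hs))
    (evolute_sub_isLittleO hγ hU harc hκ hs (hU.mem_nhds hs)
      (hmono.imp StrictMonoOn.monotoneOn StrictAntiOn.antitoneOn))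

/-- if `R` is strictly monotone then the evolute is `C¹`-regular:
`R` is a homeomorphism onto an interval and the reparametrization `ev ∘ R⁻¹` is
continuously differentiable with unit (hence nonvanishing) derivative `ν ∘ R⁻¹`,
i.e. it is a `C¹` arclength parametrization of the evolute. -/
theorem evolute_C1_regular_of_strictMono
    (a b : ℝ) (hab : a < b) (γ ν ev : ℝ → Plane) (κ R : ℝ → ℝ)
    (hγ : ContDiffOn ℝ 2 γ (Ioo a b))
    (harc : ∀ s ∈ Ioo a b, ‖deriv γ s‖ = 1)
    (hν : ∀ s, ν s = Jrot (deriv γ s))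
    (hκdef : ∀ s, κ s = ⟪deriv (deriv γ) s, ν s⟫)
    (hκ : ∀ s ∈ Ioo a b, κ s ≠ 0)
    (hR : ∀ s, R s = (κ s)⁻¹)
    (hev : ∀ s, ev s = γ s + R s • ν s)
    (hmono : StrictMonoOn R (Ioo a b) ∨ StrictAntiOn R (Ioo a b)) :
    ContinuousOn R (Ioo a b) ∧ InjOn R (Ioo a b) ∧ (R '' Ioo a b).OrdConnected ∧
    ∃ ψ : ℝ → ℝ, ContinuousOn ψ (R '' Ioo a b) ∧ (∀ s ∈ Ioo a b, ψ (R s) = s) ∧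
      (∀ t ∈ R '' Ioo a b, HasDerivAt (fun u => ev (ψ u)) (ν (ψ t)) t) ∧
      ContinuousOn (fun t => ν (ψ t)) (R '' Ioo a b) ∧
      ∀ t ∈ R '' Ioo a b, ‖ν (ψ t)‖ = 1 :=
  evolute_C1_regular_of_strictMono_general a b γ ν ev κ R hγ harc hν hκdef hκ hR hev hmono
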